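/- Fix a rigid metric space M (satisfying: equal pairwise distance matrices imply tuples are isometry-equivalent) and injective link functions. If G ~ graph_n(x*_{1:n}), then the expected normalized log-likelihood L̄(x_{1:n}) = E_G[ℓ_norm(x_{1:n}; G)] achieves its maximum over M^n exactly on the isometry class [x*_{1:n}]. -/

import Mathlib

/-!
Each pair `p < q` contributes, with a positive weight, the negative cross-entropy of the model
edge law Bernoulli(`w (dist (x p) (x q))`) relative to the true one
Bernoulli(`w (dist (x* p) (x* q))`). By Gibbs' inequality every such term is maximal exactly
when the two laws agree, so `L̄` is maximal exactly when every summand is, i.e. (`w` being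
injective) when `x` has the same distance matrix as `x*`. Distance matrices are isometry
invariants, and rigidity gives the converse.
-/

open scoped BigOperators

variable {M : Type*} [MetricSpace M]

/-- A metric space is *rigid* when any two tuples with identical pairwise
distance matrices are related by a global isometry. -/
def Rigid (M : Type*) [MetricSpace M] : Prop :=
  ∀ (n : ℕ) (x y : Fin n → M),
    (∀ p q, dist (x p) (x q) = dist (y p) (y q)) →
      ∃ φ : M ≃ᵢ M, ∀ i, φ (y i) = x i

/-- The logit function, `logit x = log (x / (1 - x))`. -/
noncomputable def logit (x : ℝ) : ℝ := Real.log (x / (1 - x))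

/-- The expected normalized log-likelihood (negative cross-entropy)
`L̄(x_{1:n}) = E_G[ℓ_norm(x_{1:n}; G)]` when `G ~ graph_n(x*_{1:n})`, i.e. when
the edges `G_{pq}` are independent Bernoulli with success probability
`w (dist (x*_p, x*_q))`:
`L̄(x) = ∑_{p<q} 2^{−p−q} (log (1 − w(dist(x_p,x_q)))
          + w(dist(x*_p,x*_q)) · logit (w(dist(x_p,x_q))))`
(with the `1`-indexed weight `2^{−p−q}` rendered as `(2⁻¹)^(p+q+2)` for
`0`-indexed `p, q`). -/
noncomputable def expectedLoglike (w : ℝ → ℝ) {n : ℕ}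
    (xstar x : Fin n → M) : ℝ :=
  ∑ p : Fin n, ∑ q : Fin n,
    if p < q then
      ((2 : ℝ)⁻¹) ^ ((p : ℕ) + (q : ℕ) + 2) *
        (Real.log (1 - w (dist (x p) (x q)))
          + w (dist (xstar p) (xstar q)) * logit (w (dist (x p) (x q))))
    else 0

noncomputable def edgeLoglike (a u : ℝ) : ℝ := Real.log (1 - u) + a * logit u

lemma edgeLoglike_eq {a u : ℝ} (hu : u ∈ Set.Ioo (0 : ℝ) 1) :
    edgeLoglike a u = a * Real.log u + (1 - a) * Real.log (1 - u) := by
  rw [edgeLoglike, logit, Real.log_div hu.1.ne' (sub_pos.2 hu.2).ne']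
  ring

/-- Gibbs' inequality for Bernoulli distributions, from strict concavity of `log`. -/
lemma edgeLoglike_lt_self {a u : ℝ} (ha : a ∈ Set.Ioo (0 : ℝ) 1)
    (hu : u ∈ Set.Ioo (0 : ℝ) 1) (hne : u ≠ a) :
    edgeLoglike a u < edgeLoglike a a := by
  obtain ⟨ha₀, ha₁⟩ := ha
  obtain ⟨hu₀, hu₁⟩ := hu
  have ha₁' : 0 < 1 - a := sub_pos.2 ha₁
  have hu₁' : 0 < 1 - u := sub_pos.2 hu₁
  have hratio : u / a ≠ (1 - u) / (1 - a) := by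
    rw [Ne, div_eq_div_iff ha₀.ne' ha₁'.ne']
    exact fun h => hne (by linarith)
  have jensen := strictConcaveOn_log_Ioi.2 (Set.mem_Ioi.2 (div_pos hu₀ ha₀))
    (Set.mem_Ioi.2 (div_pos hu₁' ha₁')) hratio ha₀ ha₁' (add_sub_cancel a 1)
  have hmean : a • (u / a) + (1 - a) • ((1 - u) / (1 - a)) = 1 := by
    simp only [smul_eq_mul]
    field_simp
    ring
  rw [hmean, Real.log_one, smul_eq_mul, smul_eq_mul, Real.log_div hu₀.ne' ha₀.ne',
    Real.log_div hu₁'.ne' ha₁'.ne'] at jensen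
  rw [edgeLoglike_eq ⟨hu₀, hu₁⟩, edgeLoglike_eq ⟨ha₀, ha₁⟩]
  linarith

lemma edgeLoglike_le_self {a u : ℝ} (ha : a ∈ Set.Ioo (0 : ℝ) 1)
    (hu : u ∈ Set.Ioo (0 : ℝ) 1) :
    edgeLoglike a u ≤ edgeLoglike a a := by
  rcases eq_or_ne u a with rfl | hne
  · exact le_rfl
  · exact (edgeLoglike_lt_self ha hu hne).le

section expectedLoglike

variable {w : ℝ → ℝ} {n : ℕ}

lemma expectedLoglike_eq_sum_pairs (xstar x : Fin n → M) :
    expectedLoglike w xstar x =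
      ∑ pq ∈ Finset.univ.filter (fun pq : Fin n × Fin n => pq.1 < pq.2),
        ((2 : ℝ)⁻¹) ^ ((pq.1 : ℕ) + (pq.2 : ℕ) + 2) *
          edgeLoglike (w (dist (xstar pq.1) (xstar pq.2))) (w (dist (x pq.1) (x pq.2))) := by
  rw [expectedLoglike, ← Finset.sum_product', Finset.sum_filter]
  rfl

lemma expectedLoglike_congr_dist {xstar x y : Fin n → M}
    (h : ∀ p q, dist (x p) (x q) = dist (y p) (y q)) :
    expectedLoglike w xstar x = expectedLoglike w xstar y := by
  simp only [expectedLoglike, h]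

lemma expectedLoglike_le_self (hw : ∀ t ∈ Set.Ici (0 : ℝ), w t ∈ Set.Ioo (0 : ℝ) 1)
    (xstar x : Fin n → M) :
    expectedLoglike w xstar x ≤ expectedLoglike w xstar xstar := by
  rw [expectedLoglike_eq_sum_pairs, expectedLoglike_eq_sum_pairs]
  refine Finset.sum_le_sum fun pq _ => mul_le_mul_of_nonneg_left ?_ (by positivity)
  exact edgeLoglike_le_self (hw _ dist_nonneg) (hw _ dist_nonneg)

lemma expectedLoglike_lt_self (hw : ∀ t ∈ Set.Ici (0 : ℝ), w t ∈ Set.Ioo (0 : ℝ) 1)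
    (hwinj : Set.InjOn w (Set.Ici 0)) (xstar x : Fin n → M) {p q : Fin n} (hpq : p < q)
    (hd : dist (x p) (x q) ≠ dist (xstar p) (xstar q)) :
    expectedLoglike w xstar x < expectedLoglike w xstar xstar := by
  rw [expectedLoglike_eq_sum_pairs, expectedLoglike_eq_sum_pairs]
  refine Finset.sum_lt_sum
    (fun pq _ => mul_le_mul_of_nonneg_left
      (edgeLoglike_le_self (hw _ dist_nonneg) (hw _ dist_nonneg)) (by positivity))
    ⟨(p, q), by simpa using hpq, mul_lt_mul_of_pos_left ?_ (by positivity)⟩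
  exact edgeLoglike_lt_self (hw _ dist_nonneg) (hw _ dist_nonneg)
    (fun h => hd (hwinj dist_nonneg dist_nonneg h))

lemma dist_eq_of_expectedLoglike_eq_self
    (hw : ∀ t ∈ Set.Ici (0 : ℝ), w t ∈ Set.Ioo (0 : ℝ) 1)
    (hwinj : Set.InjOn w (Set.Ici 0)) {xstar x : Fin n → M}
    (heq : expectedLoglike w xstar x = expectedLoglike w xstar xstar) (p q : Fin n) :
    dist (x p) (x q) = dist (xstar p) (xstar q) := by
  by_contra hd
  rcases lt_trichotomy p q with hpq | rfl | hqp
  · exact (expectedLoglike_lt_self hw hwinj xstar x hpq hd).ne heq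
  · simp at hd
  · rw [dist_comm (x p), dist_comm (xstar p)] at hd
    exact (expectedLoglike_lt_self hw hwinj xstar x hqp hd).ne heq

end expectedLoglike

/-- **The expected normalized log-likelihood is maximized exactly on the true
isometry class.**  If `M` is rigid, the link function `w` is injective with
values in `(0,1)`, and `G ~ graph_n(x*_{1:n})`, then the set of maximizers over
`M^n` of `L̄` is exactly the isometry class `[x*_{1:n}]`. -/
theorem expectedLoglike_max_iff_isometry_class (M : Type*) [MetricSpace M]
    (hM : Rigid M) (w : ℝ → ℝ)
    (hw : ∀ t ∈ Set.Ici (0 : ℝ), w t ∈ Set.Ioo (0 : ℝ) 1)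
    (hwinj : Set.InjOn w (Set.Ici 0))
    (n : ℕ) (xstar : Fin n → M) :
    {x : Fin n → M | ∀ y : Fin n → M,
        expectedLoglike w xstar y ≤ expectedLoglike w xstar x}
      = {x : Fin n → M | ∃ φ : M ≃ᵢ M, ∀ i, φ (xstar i) = x i} := by
  ext x
  constructor
  · intro hmax
    have heq := le_antisymm (expectedLoglike_le_self hw xstar x) (hmax xstar)
    exact hM n x xstar (dist_eq_of_expectedLoglike_eq_self hw hwinj heq)
  · rintro ⟨φ, hφ⟩ y
    have hdist : ∀ p q, dist (x p) (x q) = dist (xstar p) (xstar q) := fun p q => by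
      rw [← hφ p, ← hφ q, φ.dist_eq]
    rw [expectedLoglike_congr_dist hdist]
    exact expectedLoglike_le_self hw xstar y
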